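/- For every n ≥ 1, Σ_{T ∈ PT(n)} n! / ∏_{v ∈ T} ((-1)^{h_v} · h_v) = −1, where PT(n) is the set of plane trees with n vertices. -/

import Mathlib

/-- Plane trees: nonempty rooted trees whose subtrees at each vertex are linearly ordered. -/
inductive PTree : Type
  | node : List PTree → PTree

namespace PTree

mutual
/-- The number of vertices of a plane tree. -/
def size : PTree → ℕ
  | .node cs => sizeList cs + 1
/-- The total number of vertices of a plane forest (a list of plane trees). -/
def sizeList : List PTree → ℕ
  | [] => 0
  | t :: ts => size t + sizeList ts
end

mutual
/-- The multiset of hook lengths of a plane tree: the hook length of a vertex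
is the number of its descendants, counting the vertex itself. -/
def hooks : PTree → Multiset ℕ+
  | .node cs => ⟨sizeList cs + 1, Nat.succ_pos _⟩ ::ₘ hooksList cs
/-- The multiset of hook lengths of a plane forest. -/
def hooksList : List PTree → Multiset ℕ+
  | [] => 0
  | t :: ts => hooks t + hooksList ts
end

end PTree

/-!
Weight a plane tree by the inverse of its signed hook product, and a forest by the product of the
weights of its trees. Removing the root of a tree with `k + 1` vertices leaves a forest with `k`
vertices and divides the weight by `(-1) ^ (k + 1) * (k + 1)`; splitting off the first tree of a
forest is a convolution. So the total weights `F m` of forests and `T n` of trees satisfy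
`T (k + 1) = F k / ((-1) ^ (k + 1) * (k + 1))` and `F (m + 1) = ∑_{k + j = m} T (k + 1) * F j`,
which are solved by `F m = (-1) ^ m / m!` and `T n = -1 / n!`: the convolution is the coefficient
identity `exp x * exp (-x) = 1`.
-/

noncomputable instance : DecidableEq PTree := Classical.decEq _

section

open Finset Nat

theorem sum_antidiagonal_neg_one_pow_div_factorial_mul_factorial {K : Type*} [Field K]
    [CharZero K] {n : ℕ} (hn : n ≠ 0) :
    ∑ p ∈ antidiagonal n, (-1 : K) ^ p.2 / (p.1 ! * p.2 ! : K) = 0 := by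
  have hbinom := (Commute.one_left (-1 : K)).add_pow' n
  rw [add_neg_cancel, zero_pow hn, eq_comm] at hbinom
  have hfac : (n ! : K) ≠ 0 := cast_ne_zero.mpr n.factorial_ne_zero
  rw [← mul_right_inj' hfac, mul_zero, mul_sum, ← hbinom]
  refine sum_congr rfl fun p hp => ?_
  obtain rfl := HasAntidiagonal.mem_antidiagonal.mp hp
  rw [nsmul_eq_mul, cast_add_choose, one_pow, one_mul]
  ring

end

namespace PTree

open Finset Nat

@[simp] lemma size_node (cs : List PTree) : (node cs).size = sizeList cs + 1 := rfl

@[simp] lemma sizeList_nil : sizeList [] = 0 := rfl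

@[simp] lemma sizeList_cons (t : PTree) (ts : List PTree) :
    sizeList (t :: ts) = t.size + sizeList ts := rfl

lemma hooks_node (cs : List PTree) :
    (node cs).hooks = (sizeList cs).succPNat ::ₘ hooksList cs := rfl

lemma hooksList_cons (t : PTree) (ts : List PTree) :
    hooksList (t :: ts) = t.hooks + hooksList ts := rfl

noncomputable def forests : ℕ → Finset (List PTree)
  | 0 => {[]}
  | m + 1 => (antidiagonal m).attach.biUnion fun p =>
      ((forests p.1.1).image node ×ˢ forests p.1.2).image fun q => q.1 :: q.2
decreasing_by
  all_goals have := HasAntidiagonal.mem_antidiagonal.mp p.2; omega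

/-- The plane trees with `m + 1` vertices. -/
noncomputable def trees (m : ℕ) : Finset PTree := (forests m).image node

lemma mem_forests {m : ℕ} {ts : List PTree} : ts ∈ forests m ↔ sizeList ts = m := by
  induction m using Nat.strong_induction_on generalizing ts with
  | _ m ih =>
  match m, ts with
  | 0, [] => simp [forests]
  | 0, node cs :: ts => simp [forests]
  | m + 1, [] => simp [forests]
  | m + 1, node cs :: ts =>
    rw [forests]
    simp only [mem_biUnion, mem_attach, true_and, mem_image, mem_product, Subtype.exists,
      HasAntidiagonal.mem_antidiagonal, Prod.exists, List.cons.injEq]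
    constructor
    · rintro ⟨k, j, hkj, _, _, ⟨⟨cs', hcs', hcs⟩, hts⟩, rfl, rfl⟩
      obtain rfl := node.inj hcs
      rw [ih k (by omega)] at hcs'
      rw [ih j (by omega)] at hts
      simp only [sizeList_cons, size_node]
      omega
    · intro h
      simp only [sizeList_cons, size_node] at h
      refine ⟨sizeList cs, sizeList ts, by omega, node cs, ts, ⟨⟨cs, ?_, rfl⟩, ?_⟩, rfl, rfl⟩
      · exact (ih _ (by omega)).mpr rfl
      · exact (ih _ (by omega)).mpr rfl

lemma mem_trees {m : ℕ} {t : PTree} : t ∈ trees m ↔ t.size = m + 1 := by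
  cases t
  simp [trees, mem_forests]

lemma forests_succ_pairwiseDisjoint (m : ℕ) :
    ((antidiagonal m).attach : Set {p // p ∈ antidiagonal m}).PairwiseDisjoint fun p =>
      ((forests p.1.1).image node ×ˢ forests p.1.2).image fun q => q.1 :: q.2 := by
  rintro ⟨⟨k, j⟩, hkj⟩ - ⟨⟨k', j'⟩, hkj'⟩ - hne
  refine disjoint_left.mpr fun ts hts hts' => hne ?_
  simp only [mem_image, mem_product, Prod.exists, mem_forests] at hts hts'
  obtain ⟨_, _, ⟨⟨cs, rfl, rfl⟩, -⟩, rfl⟩ := hts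
  obtain ⟨_, _, ⟨⟨cs', hk', rfl⟩, -⟩, h⟩ := hts'
  obtain rfl := node.inj (List.cons.inj h).1
  rw [HasAntidiagonal.mem_antidiagonal] at hkj hkj'
  simp only [Subtype.mk.injEq, Prod.mk.injEq]
  omega

def signedHookProd (s : Multiset ℕ+) : ℚ := (s.map fun h => (-1 : ℚ) ^ (h : ℕ) * (h : ℚ)).prod

lemma signedHookProd_add (s s' : Multiset ℕ+) :
    signedHookProd (s + s') = signedHookProd s * signedHookProd s' := by
  simp [signedHookProd]

lemma signedHookProd_hooks_node (cs : List PTree) :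
    signedHookProd (node cs).hooks =
      (-1) ^ (sizeList cs + 1) * (sizeList cs + 1) * signedHookProd (hooksList cs) := by
  simp [signedHookProd, hooks_node]

noncomputable def forestSum (m : ℕ) : ℚ := ∑ ts ∈ forests m, (signedHookProd (hooksList ts))⁻¹

noncomputable def treeSum (m : ℕ) : ℚ := ∑ t ∈ trees m, (signedHookProd t.hooks)⁻¹

lemma forestSum_zero : forestSum 0 = 1 := by
  simp [forestSum, forests, signedHookProd, hooksList]

lemma treeSum_eq_mul_forestSum (m : ℕ) : treeSum m = ((-1 : ℚ) ^ (m + 1) * (m + 1))⁻¹ * forestSum m := by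
  rw [treeSum, trees, sum_image fun _ _ _ _ => node.inj, forestSum, mul_sum]
  refine sum_congr rfl fun cs hcs => ?_
  rw [signedHookProd_hooks_node, mem_forests.mp hcs, mul_inv]

lemma forestSum_succ (m : ℕ) :
    forestSum (m + 1) = ∑ p ∈ antidiagonal m, treeSum p.1 * forestSum p.2 := by
  rw [forestSum, forests, sum_biUnion (forests_succ_pairwiseDisjoint m),
    ← sum_attach (antidiagonal m)]
  refine sum_congr rfl fun p _ => ?_
  rw [sum_image fun _ _ _ _ h => Prod.ext_iff.mpr (List.cons.inj h), sum_product, treeSum,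
    forestSum, trees, sum_mul_sum]
  simp only [hooksList_cons, signedHookProd_add, mul_inv]

lemma treeSum_eq_of_forestSum_eq {m : ℕ} (h : forestSum m = (-1) ^ m / m !) :
    treeSum m = -((m + 1) ! : ℚ)⁻¹ := by
  rw [treeSum_eq_mul_forestSum, h, factorial_succ]
  push_cast
  field_simp
  ring

lemma forestSum_eq (m : ℕ) : forestSum m = (-1) ^ m / m ! := by
  induction m using Nat.strong_induction_on with
  | _ m ih =>
  cases m with
  | zero => simp [forestSum_zero]
  | succ m =>
    have hexp := sum_antidiagonal_neg_one_pow_div_factorial_mul_factorial (K := ℚ)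
      (succ_ne_zero m)
    rw [sum_antidiagonal_succ] at hexp
    simp only [factorial_zero, cast_one, one_mul] at hexp
    calc forestSum (m + 1)
        = -∑ p ∈ antidiagonal m, (-1 : ℚ) ^ p.2 / ((p.1 + 1) ! * p.2 !) := by
          rw [forestSum_succ, ← sum_neg_distrib]
          refine sum_congr rfl fun p hp => ?_
          have := HasAntidiagonal.mem_antidiagonal.mp hp
          rw [treeSum_eq_of_forestSum_eq (ih p.1 (by omega)), ih p.2 (by omega)]
          ring
      _ = (-1) ^ (m + 1) / (m + 1) ! := by linear_combination -hexp

lemma treeSum_eq_neg_inv_factorial (m : ℕ) : treeSum m = -((m + 1) ! : ℚ)⁻¹ :=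
  treeSum_eq_of_forestSum_eq (forestSum_eq m)

end PTree

/-- Yang's alternating hook length formula for plane trees. -/
theorem alternating_hook_formula_plane_trees (n : ℕ) (hn : 1 ≤ n) :
    ∑ᶠ T : {t : PTree // t.size = n},
      (n.factorial : ℚ) /
        ((T : PTree).hooks.map fun h => (-1 : ℚ) ^ (h : ℕ) * (h : ℚ)).prod
    = -1 := by
  obtain ⟨m, rfl⟩ : ∃ m, n = m + 1 := ⟨n - 1, by omega⟩
  have htrees : {t : PTree | t.size = m + 1} = ↑(PTree.trees m) :=
    Set.ext fun _ => PTree.mem_trees.symm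
  calc _ = ∑ t ∈ PTree.trees m, ((m + 1).factorial : ℚ) / PTree.signedHookProd t.hooks := by
        change ∑ᶠ t : {t : PTree | t.size = m + 1}, _ / PTree.signedHookProd (t : PTree).hooks = _
        rw [finsum_set_coe_eq_finsum_mem (f := fun t : PTree => ((m + 1).factorial : ℚ) /
          PTree.signedHookProd t.hooks), htrees, finsum_mem_coe_finset]
    _ = (m + 1).factorial * PTree.treeSum m := by
        simp only [PTree.treeSum, Finset.mul_sum, div_eq_mul_inv]
    _ = -1 := by
        rw [PTree.treeSum_eq_neg_inv_factorial]
        field_simp
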